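/- Define h₁: ℝ → ℝ by h₁(x) = 1 for x ≤ 0; 1/2 for 0 < x ≤ 1; 1/(2x²) for 1 ≤ x < √2; g(x) for √2 ≤ x ≤ √3; h(x) for x ≥ √3, where g(x) = (c₁/250)(251 Φ̄(x) + φ(x)), h(x) = c₂ Φ̄(x), c₁ = 1/(4Φ̄(√2)), c₂ = c₁(1 + (1 + r(√3))/250). Then h₁(x) ≤ h(x) for all real x. -/

import Mathlib

/-!
On `x ≥ √3` the two sides agree, and on `[√2, √3]` the inequality `g ≤ h` reduces to
`mills x ≤ mills √3`, i.e. to the monotonicity of the Mills ratio, which follows from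
`x Φ̄(x) ≤ φ(x)`. On `[1, √2]` the derivative of `x² Φ̄(x)` is `x (2Φ̄(x) - x φ(x))`, whose second
factor decreases on `[-√3, √3]`, so `x² Φ̄(x)` is minimal at an endpoint; with
`c₂ ≥ c₁ = 1/(4Φ̄(√2))` everything left reduces to `2 c₂ Φ̄(1) ≥ 1`, i.e. to
`Φ̄(1) / Φ̄(√2) ≳ 1.98`. This last numerical fact is certified by bounding
`φ(t) = φ(a) exp(-(a(t - a) + (t - a)²/2))` on short intervals `[a, b]` by Taylor polynomials of
`exp`, with `φ(a)` itself bounded through `exp(-a²/2) = exp(-a²/16)⁸`.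
-/

open MeasureTheory Real Set

noncomputable def phi (x : ℝ) : ℝ := Real.exp (-x^2/2) / Real.sqrt (2*Real.pi)
noncomputable def Phibar (x : ℝ) : ℝ := ∫ u in Set.Ioi x, phi u
noncomputable def mills (x : ℝ) : ℝ := phi x / Phibar x
noncomputable def c1 : ℝ := 1 / (4 * Phibar (Real.sqrt 2))
noncomputable def c2 : ℝ := c1 * (1 + (1 + mills (Real.sqrt 3))/250)
noncomputable def g (x : ℝ) : ℝ := c1/250 * (251 * Phibar x + phi x)
noncomputable def h (x : ℝ) : ℝ := c2 * Phibar x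

noncomputable def h1 (x : ℝ) : ℝ :=
  if x ≤ 0 then 1
  else if x ≤ 1 then 1/2
  else if x < Real.sqrt 2 then 1/(2*x^2)
  else if x ≤ Real.sqrt 3 then g x
  else h x

lemma le_sqrt_two_mul_pi : (2.5066 : ℝ) ≤ √(2 * π) :=
  Real.le_sqrt_of_sq_le (by nlinarith [pi_gt_d6])

lemma sqrt_two_mul_pi_le : √(2 * π) ≤ 2.50663 :=
  (Real.sqrt_le_left (by norm_num)).2 (by nlinarith [pi_lt_d6])

lemma phi_pos (x : ℝ) : 0 < phi x := by
  unfold phi; positivity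

lemma continuous_phi : Continuous phi := by
  unfold phi; fun_prop

lemma phi_eq_exp_mul_sq (x : ℝ) : phi x = exp (-(1 / 2) * x ^ 2) / √(2 * π) := by
  rw [phi]; ring_nf

lemma integrable_phi : Integrable phi := by
  rw [funext phi_eq_exp_mul_sq]
  exact (integrable_exp_neg_mul_sq (by norm_num : (0 : ℝ) < 1 / 2)).div_const _

lemma integrable_mul_phi : Integrable fun t => t * phi t := by
  simpa only [phi_eq_exp_mul_sq, mul_div_assoc] using
    (integrable_mul_exp_neg_mul_sq (by norm_num : (0 : ℝ) < 1 / 2)).div_const _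

lemma hasDerivAt_phi (x : ℝ) : HasDerivAt phi (-x * phi x) x := by
  have h := ((((hasDerivAt_pow 2 x).fun_neg).div_const 2).exp).div_const √(2 * π)
  refine (h.congr_deriv ?_ : HasDerivAt (fun y => exp (-y ^ 2 / 2) / √(2 * π)) _ x)
  simp only [phi]; push_cast; ring

lemma tendsto_phi_atTop : Filter.Tendsto phi Filter.atTop (nhds 0) := by
  have h : Filter.Tendsto (fun t : ℝ => -t ^ 2 / 2) Filter.atTop Filter.atBot :=
    (Filter.tendsto_neg_atBot_iff.2 (Filter.tendsto_pow_atTop two_ne_zero)).atBot_div_const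
      two_pos
  have h' := (tendsto_exp_atBot.comp h).div_const √(2 * π)
  rwa [zero_div] at h'

lemma Phibar_eq_integral_add {a b : ℝ} (hab : a ≤ b) :
    Phibar a = (∫ t in a..b, phi t) + Phibar b := by
  rw [Phibar, Phibar, intervalIntegral.integral_of_le hab,
    ← setIntegral_union (Ioc_disjoint_Ioi le_rfl) measurableSet_Ioi
      integrable_phi.integrableOn integrable_phi.integrableOn, Ioc_union_Ioi_eq_Ioi hab]

lemma Phibar_pos (x : ℝ) : 0 < Phibar x := by
  rw [Phibar, setIntegral_pos_iff_support_of_nonneg_ae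
    (Filter.Eventually.of_forall fun t => (phi_pos t).le) integrable_phi.integrableOn,
    Function.support_eq_univ fun t => (phi_pos t).ne', univ_inter, volume_Ioi]
  exact WithTop.top_pos

lemma antitone_Phibar : Antitone Phibar := fun a b hab => by
  rw [Phibar_eq_integral_add hab]
  linarith [intervalIntegral.integral_nonneg (μ := volume) hab fun t _ => (phi_pos t).le]

lemma hasDerivAt_Phibar (x : ℝ) : HasDerivAt Phibar (-phi x) x := by
  have hsplit : Phibar = fun y => Phibar 0 - ∫ t in (0 : ℝ)..y, phi t := by
    ext y
    rcases le_total 0 y with h | h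
    · rw [Phibar_eq_integral_add h]; ring
    · rw [Phibar_eq_integral_add h, intervalIntegral.integral_symm]; ring
  rw [hsplit]
  exact (intervalIntegral.integral_hasDerivAt_right integrable_phi.intervalIntegrable
    (continuous_phi.stronglyMeasurableAtFilter _ _) continuous_phi.continuousAt).const_sub _

lemma Phibar_zero : Phibar 0 = 1 / 2 := by
  have h := integral_gaussian_Ioi (1 / 2)
  rw [show π / (1 / 2) = 2 * π by ring] at h
  rw [Phibar, funext phi_eq_exp_mul_sq, integral_div, h]
  field_simp

lemma integral_Ioi_mul_phi (a : ℝ) : ∫ t in Ioi a, t * phi t = phi a := by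
  simpa using integral_Ioi_of_hasDerivAt_of_tendsto' (f := fun t => -phi t) (a := a) (m := 0)
    (fun x _ => by simpa using (hasDerivAt_phi x).fun_neg) integrable_mul_phi.integrableOn
    (by simpa using tendsto_phi_atTop.neg)

lemma mul_Phibar_le_phi (x : ℝ) : x * Phibar x ≤ phi x := by
  rw [Phibar, ← integral_const_mul, ← integral_Ioi_mul_phi x]
  exact setIntegral_mono_on (integrable_phi.integrableOn.const_mul x)
    integrable_mul_phi.integrableOn measurableSet_Ioi
    fun t ht => mul_le_mul_of_nonneg_right (le_of_lt ht) (phi_pos t).le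

lemma le_mills (x : ℝ) : x ≤ mills x :=
  (le_div_iff₀ (Phibar_pos x)).2 (mul_Phibar_le_phi x)

lemma antitone_Phibar_div_phi : Antitone fun x => Phibar x / phi x := by
  have hF (x : ℝ) := (hasDerivAt_Phibar x).fun_div (hasDerivAt_phi x) (phi_pos x).ne'
  refine antitone_of_deriv_nonpos (fun x => (hF x).differentiableAt) fun x => ?_
  rw [(hF x).deriv]
  refine div_nonpos_of_nonpos_of_nonneg ?_ (sq_nonneg _)
  nlinarith [mul_Phibar_le_phi x, phi_pos x]

lemma monotone_mills : Monotone mills := fun a b hab => by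
  have h := antitone_Phibar_div_phi hab
  have hinv (x : ℝ) : mills x = (Phibar x / phi x)⁻¹ := (inv_div _ _).symm
  rw [hinv, hinv]
  exact inv_anti₀ (div_pos (Phibar_pos b) (phi_pos b)) h

lemma min_le_of_hasDerivAt_mul_antitoneOn {f w ψ : ℝ → ℝ} {a b x : ℝ}
    (hf : ∀ t, HasDerivAt f (w t * ψ t) t) (hw : ∀ t ∈ Icc a b, 0 ≤ w t)
    (hψ : AntitoneOn ψ (Icc a b)) (hx : x ∈ Icc a b) : min (f a) (f b) ≤ f x := by
  have hcont : Continuous f := continuous_iff_continuousAt.2 fun t => (hf t).continuousAt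
  have hdiff (s : Set ℝ) : DifferentiableOn ℝ f (interior s) :=
    fun t _ => (hf t).differentiableAt.differentiableWithinAt
  rcases le_or_gt 0 (ψ x) with hψx | hψx
  · have hmono : MonotoneOn f (Icc a x) := by
      refine monotoneOn_of_deriv_nonneg (convex_Icc a x) hcont.continuousOn (hdiff _) ?_
      intro t ht
      rw [interior_Icc] at ht
      have htab : t ∈ Icc a b := ⟨ht.1.le, ht.2.le.trans hx.2⟩
      rw [(hf t).deriv]
      exact mul_nonneg (hw t htab) (hψx.trans (hψ htab hx ht.2.le))
    exact min_le_of_left_le (hmono (left_mem_Icc.2 hx.1) (right_mem_Icc.2 hx.1) hx.1)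
  · have hanti : AntitoneOn f (Icc x b) := by
      refine antitoneOn_of_deriv_nonpos (convex_Icc x b) hcont.continuousOn (hdiff _) ?_
      intro t ht
      rw [interior_Icc] at ht
      have htab : t ∈ Icc a b := ⟨hx.1.trans ht.1.le, ht.2.le⟩
      rw [(hf t).deriv]
      exact mul_nonpos_of_nonneg_of_nonpos (hw t htab) ((hψ hx htab ht.1.le).trans hψx.le)
    exact min_le_of_right_le (hanti (left_mem_Icc.2 hx.2) (right_mem_Icc.2 hx.2) hx.2)

lemma hasDerivAt_sq_mul_Phibar (x : ℝ) :
    HasDerivAt (fun y => y ^ 2 * Phibar y) (x * (2 * Phibar x - x * phi x)) x := by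
  refine ((hasDerivAt_pow 2 x).fun_mul (hasDerivAt_Phibar x)).congr_deriv ?_
  push_cast; ring

lemma antitoneOn_two_mul_Phibar_sub_mul_phi :
    AntitoneOn (fun y => 2 * Phibar y - y * phi y) (Icc (-√3) √3) := by
  have hψ (t : ℝ) : HasDerivAt (fun y => 2 * Phibar y - y * phi y) ((t ^ 2 - 3) * phi t) t := by
    refine (((hasDerivAt_Phibar t).const_mul 2).fun_sub
      ((hasDerivAt_id t).fun_mul (hasDerivAt_phi t))).congr_deriv ?_
    simp only [id_eq]; ring
  refine antitoneOn_of_deriv_nonpos (convex_Icc _ _)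
    (HasDerivAt.continuousOn fun t _ => hψ t)
    (fun t _ => (hψ t).differentiableAt.differentiableWithinAt) fun t ht => ?_
  rw [interior_Icc] at ht
  rw [(hψ t).deriv]
  have ht2 : t ^ 2 ≤ 3 := by
    nlinarith [ht.1, ht.2, Real.sq_sqrt (show (0 : ℝ) ≤ 3 by norm_num)]
  exact mul_nonpos_of_nonpos_of_nonneg (by linarith) (phi_pos t).le

lemma min_Phibar_one_le_sq_mul_Phibar {x : ℝ} (hx : x ∈ Icc 1 √2) :
    min (Phibar 1) (2 * Phibar √2) ≤ x ^ 2 * Phibar x := by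
  have h := min_le_of_hasDerivAt_mul_antitoneOn hasDerivAt_sq_mul_Phibar
    (fun t ht => zero_le_one.trans ht.1)
    (antitoneOn_two_mul_Phibar_sub_mul_phi.mono (Icc_subset_Icc (by
      linarith [Real.sqrt_nonneg 3]) (Real.sqrt_le_sqrt (by norm_num)))) hx
  simpa [Real.sq_sqrt] using h

lemma exp_neg_taylor_bounds {s : ℝ} (h0 : 0 ≤ s) (h1 : s ≤ 1) :
    1 - s + s ^ 2 / 2 - s ^ 3 / 6 - 5 * s ^ 4 / 96 ≤ exp (-s) ∧
    exp (-s) ≤ 1 - s + s ^ 2 / 2 - s ^ 3 / 6 + 5 * s ^ 4 / 96 := by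
  have h := Real.exp_bound (x := -s) (by rwa [abs_neg, abs_of_nonneg h0]) (n := 4) (by norm_num)
  have hsum : ∑ i ∈ Finset.range 4, (-s) ^ i / (Nat.factorial i)
      = 1 - s + s ^ 2 / 2 - s ^ 3 / 6 := by
    simp [Finset.sum_range_succ, Nat.factorial]
    ring
  rw [hsum, abs_neg, abs_of_nonneg h0] at h
  norm_num [Nat.factorial] at h
  constructor <;> linarith [abs_le.1 h]

lemma le_phi_of_taylor {a s p : ℝ} (h0 : 0 ≤ s) (h1 : s ≤ 1) (ha : a ^ 2 / 2 ≤ 8 * s)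
    (hpos : 0 ≤ 1 - s + s ^ 2 / 2 - s ^ 3 / 6 - 5 * s ^ 4 / 96) (hp0 : 0 ≤ p)
    (hp : p * 2.50663 ≤ (1 - s + s ^ 2 / 2 - s ^ 3 / 6 - 5 * s ^ 4 / 96) ^ 8) :
    p ≤ phi a := by
  rw [phi, le_div_iff₀ (by positivity)]
  calc p * √(2 * π) ≤ p * 2.50663 := mul_le_mul_of_nonneg_left sqrt_two_mul_pi_le hp0
    _ ≤ (1 - s + s ^ 2 / 2 - s ^ 3 / 6 - 5 * s ^ 4 / 96) ^ 8 := hp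
    _ ≤ exp (-s) ^ 8 := pow_le_pow_left₀ hpos (exp_neg_taylor_bounds h0 h1).1 8
    _ = exp (-(8 * s)) := by rw [← exp_nat_mul]; push_cast; ring_nf
    _ ≤ exp (-a ^ 2 / 2) := exp_le_exp.2 (by linarith)

lemma phi_le_of_taylor {a s p : ℝ} (h0 : 0 ≤ s) (h1 : s ≤ 1) (ha : 8 * s ≤ a ^ 2 / 2)
    (hp0 : 0 ≤ p) (hp : (1 - s + s ^ 2 / 2 - s ^ 3 / 6 + 5 * s ^ 4 / 96) ^ 8 ≤ p * 2.5066) :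
    phi a ≤ p := by
  rw [phi, div_le_iff₀ (by positivity)]
  calc exp (-a ^ 2 / 2) ≤ exp (-(8 * s)) := exp_le_exp.2 (by linarith)
    _ = exp (-s) ^ 8 := by rw [← exp_nat_mul]; push_cast; ring_nf
    _ ≤ (1 - s + s ^ 2 / 2 - s ^ 3 / 6 + 5 * s ^ 4 / 96) ^ 8 :=
        pow_le_pow_left₀ (exp_nonneg _) (exp_neg_taylor_bounds h0 h1).2 8
    _ ≤ p * 2.5066 := hp
    _ ≤ p * √(2 * π) := mul_le_mul_of_nonneg_left le_sqrt_two_mul_pi hp0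

/-- `∫ t in a..b, (1 - u t + c * u t ^ 2)` for `u t = a * (t - a) + (t - a) ^ 2 / 2`, the
exponent in `phi t = phi a * exp (-u t)`. -/
noncomputable def gaussianPieceIntegral (a b c : ℝ) : ℝ :=
  (b - a) - a * (b - a) ^ 2 / 2 - (b - a) ^ 3 / 6
    + c * (a ^ 2 * (b - a) ^ 3 / 3 + a * (b - a) ^ 4 / 4 + (b - a) ^ 5 / 20)

lemma phi_eq_phi_mul_exp (a t : ℝ) : phi t = phi a * exp (-(a * (t - a) + (t - a) ^ 2 / 2)) := by
  rw [phi, phi, div_mul_eq_mul_div, ← exp_add]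
  ring_nf

lemma integral_taylor_piece (a b c : ℝ) :
    ∫ t in a..b, (1 - (a * (t - a) + (t - a) ^ 2 / 2) + c * (a * (t - a) + (t - a) ^ 2 / 2) ^ 2)
      = gaussianPieceIntegral a b c := by
  have hF (t : ℝ) : HasDerivAt (fun y => gaussianPieceIntegral a y c)
      (1 - (a * (t - a) + (t - a) ^ 2 / 2) + c * (a * (t - a) + (t - a) ^ 2 / 2) ^ 2) t := by
    have hid : HasDerivAt (fun y : ℝ => y - a) 1 t := (hasDerivAt_id t).sub_const a
    refine ((((hid.fun_sub (((hid.pow 2).const_mul a).div_const 2)).fun_sub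
      ((hid.pow 3).div_const 6)).fun_add (HasDerivAt.const_mul c
      (((((hid.pow 3).const_mul (a ^ 2)).div_const 3).fun_add
        (((hid.pow 4).const_mul a).div_const 4)).fun_add
          ((hid.pow 5).div_const 20))))).congr_deriv ?_
    push_cast; ring
  rw [intervalIntegral.integral_eq_sub_of_hasDerivAt (fun t _ => hF t)
    (Continuous.intervalIntegrable (by fun_prop) a b)]
  simp [gaussianPieceIntegral]

lemma le_integral_phi_of_taylor {a b p v : ℝ} (ha : 0 ≤ a) (hab : a ≤ b)
    (hM : a * (b - a) + (b - a) ^ 2 / 2 ≤ 1) (hp : p ≤ phi a)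
    (hI : 0 ≤ gaussianPieceIntegral a b
      (1 / 2 - (a * (b - a) + (b - a) ^ 2 / 2) / 6
        - 5 * (a * (b - a) + (b - a) ^ 2 / 2) ^ 2 / 96))
    (hv : v ≤ p * gaussianPieceIntegral a b
      (1 / 2 - (a * (b - a) + (b - a) ^ 2 / 2) / 6
        - 5 * (a * (b - a) + (b - a) ^ 2 / 2) ^ 2 / 96)) :
    v ≤ ∫ t in a..b, phi t := by
  set M := a * (b - a) + (b - a) ^ 2 / 2 with hM_def
  set c := 1 / 2 - M / 6 - 5 * M ^ 2 / 96 with hc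
  have hpt : ∀ t ∈ Icc a b,
      phi a * (1 - (a * (t - a) + (t - a) ^ 2 / 2) + c * (a * (t - a) + (t - a) ^ 2 / 2) ^ 2)
        ≤ phi t := by
    rintro t ⟨hta, htb⟩
    rw [phi_eq_phi_mul_exp a t]
    refine mul_le_mul_of_nonneg_left ?_ (phi_pos a).le
    have hu0 : 0 ≤ a * (t - a) + (t - a) ^ 2 / 2 := by nlinarith
    have huM : a * (t - a) + (t - a) ^ 2 / 2 ≤ M := by nlinarith
    generalize a * (t - a) + (t - a) ^ 2 / 2 = u at hu0 huM ⊢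
    have he := (exp_neg_taylor_bounds hu0 (huM.trans hM)).1
    -- the cubic and quartic Taylor terms are absorbed into `c * u ^ 2` because `u ≤ M`
    nlinarith [mul_nonneg (mul_nonneg (sub_nonneg.2 huM) (add_nonneg (hu0.trans huM) hu0))
      (sq_nonneg u), mul_nonneg (sub_nonneg.2 huM) (sq_nonneg u)]
  have hint := intervalIntegral.integral_mono_on hab
    (Continuous.intervalIntegrable (by fun_prop) a b) integrable_phi.intervalIntegrable hpt
  rw [intervalIntegral.integral_const_mul, integral_taylor_piece] at hint
  exact hv.trans ((mul_le_mul_of_nonneg_right hp hI).trans hint)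

lemma integral_phi_le_of_taylor {a b p v : ℝ} (ha : 0 ≤ a) (hab : a ≤ b)
    (hM : a * (b - a) + (b - a) ^ 2 / 2 ≤ 1) (hp : phi a ≤ p)
    (hI : 0 ≤ gaussianPieceIntegral a b (1 / 2)) (hv : p * gaussianPieceIntegral a b (1 / 2) ≤ v) :
    ∫ t in a..b, phi t ≤ v := by
  have hpt : ∀ t ∈ Icc a b, phi t ≤ phi a *
      (1 - (a * (t - a) + (t - a) ^ 2 / 2) + 1 / 2 * (a * (t - a) + (t - a) ^ 2 / 2) ^ 2) := by
    rintro t ⟨hta, htb⟩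
    rw [phi_eq_phi_mul_exp a t]
    refine mul_le_mul_of_nonneg_left ?_ (phi_pos a).le
    have hu0 : 0 ≤ a * (t - a) + (t - a) ^ 2 / 2 := by nlinarith
    have hu1 : a * (t - a) + (t - a) ^ 2 / 2 ≤ 1 := by nlinarith
    generalize a * (t - a) + (t - a) ^ 2 / 2 = u at hu0 hu1 ⊢
    have he := (exp_neg_taylor_bounds hu0 hu1).2
    nlinarith [mul_nonneg (mul_nonneg hu0 hu0) (mul_nonneg hu0 (by linarith : 0 ≤ 16 - 5 * u))]
  have hint := intervalIntegral.integral_mono_on hab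
    integrable_phi.intervalIntegrable (Continuous.intervalIntegrable (by fun_prop) a b) hpt
  rw [intervalIntegral.integral_const_mul, integral_taylor_piece] at hint
  exact (hint.trans (mul_le_mul_of_nonneg_right hp hI)).trans hv

lemma le_integral_phi_one_1414 : (0.079942 : ℝ) ≤ ∫ t in (1 : ℝ)..1.414, phi t := by
  have n0 : (0.241967 : ℝ) ≤ phi 1 := by
    apply le_phi_of_taylor (s := 1 / 16) <;> norm_num
  have n1 : (0.217715 : ℝ) ≤ phi 1.1 := by
    apply le_phi_of_taylor (s := 0.0757) <;> norm_num
  have n2 : (0.194175 : ℝ) ≤ phi 1.2 := by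
    apply le_phi_of_taylor (s := 0.09) <;> norm_num
  have n3 : (0.171248 : ℝ) ≤ phi 1.3 := by
    apply le_phi_of_taylor (s := 0.1057) <;> norm_num
  have p0 : (0.022988 : ℝ) ≤ ∫ t in (1 : ℝ)..1.1, phi t := by
    apply le_integral_phi_of_taylor (hp := n0) <;> norm_num [gaussianPieceIntegral]
  have p1 : (0.020582 : ℝ) ≤ ∫ t in (1.1 : ℝ)..1.2, phi t := by
    apply le_integral_phi_of_taylor (hp := n1) <;> norm_num [gaussianPieceIntegral]
  have p2 : (0.018267 : ℝ) ≤ ∫ t in (1.2 : ℝ)..1.3, phi t := by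
    apply le_integral_phi_of_taylor (hp := n2) <;> norm_num [gaussianPieceIntegral]
  have p3 : (0.018105 : ℝ) ≤ ∫ t in (1.3 : ℝ)..1.414, phi t := by
    apply le_integral_phi_of_taylor (hp := n3) <;> norm_num [gaussianPieceIntegral]
  have hi (a b : ℝ) : IntervalIntegrable phi volume a b := integrable_phi.intervalIntegrable
  rw [← intervalIntegral.integral_add_adjacent_intervals (hi 1 1.3) (hi 1.3 1.414),
    ← intervalIntegral.integral_add_adjacent_intervals (hi 1 1.2) (hi 1.2 1.3),
    ← intervalIntegral.integral_add_adjacent_intervals (hi 1 1.1) (hi 1.1 1.2)]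
  linarith

lemma Phibar_two_le : Phibar 2 ≤ 0.02318 := by
  have n3 : phi 2 ≤ 0.054019 := by
    apply phi_le_of_taylor (s := 0.25) <;> norm_num
  have n4 : phi 2.2 ≤ 0.035517 := by
    apply phi_le_of_taylor (s := 0.3025) <;> norm_num
  have n5 : phi 2.4 ≤ 0.022452 := by
    apply phi_le_of_taylor (s := 0.36) <;> norm_num
  have n6 : phi 2.7 ≤ 0.010503 := by
    apply phi_le_of_taylor (s := 0.4556) <;> norm_num
  have n7 : phi 3 ≤ 0.004525 := by
    apply phi_le_of_taylor (s := 0.5625) <;> norm_num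
  have q3 : ∫ t in (2 : ℝ)..2.2, phi t ≤ 0.008882 := by
    apply integral_phi_le_of_taylor (hp := n3) <;> norm_num [gaussianPieceIntegral]
  have q4 : ∫ t in (2.2 : ℝ)..2.4, phi t ≤ 0.005739 := by
    apply integral_phi_le_of_taylor (hp := n4) <;> norm_num [gaussianPieceIntegral]
  have q5 : ∫ t in (2.4 : ℝ)..2.7, phi t ≤ 0.004848 := by
    apply integral_phi_le_of_taylor (hp := n5) <;> norm_num [gaussianPieceIntegral]
  have q6 : ∫ t in (2.7 : ℝ)..3, phi t ≤ 0.002202 := by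
    apply integral_phi_le_of_taylor (hp := n6) <;> norm_num [gaussianPieceIntegral]
  rw [Phibar_eq_integral_add (a := 2) (b := 2.2) (by norm_num),
    Phibar_eq_integral_add (a := 2.2) (b := 2.4) (by norm_num),
    Phibar_eq_integral_add (a := 2.4) (b := 2.7) (by norm_num),
    Phibar_eq_integral_add (a := 2.7) (b := 3) (by norm_num)]
  linarith [mul_Phibar_le_phi 3]

lemma Phibar_1414_le : Phibar 1.414 ≤ 0.079218 := by
  have n0 : phi 1.414 ≤ 0.146886 := by
    apply phi_le_of_taylor (s := 0.1249) <;> norm_num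
  have n1 : phi 1.6 ≤ 0.110931 := by
    apply phi_le_of_taylor (s := 0.16) <;> norm_num
  have n2 : phi 1.8 ≤ 0.078967 := by
    apply phi_le_of_taylor (s := 0.2025) <;> norm_num
  have q0 : ∫ t in (1.414 : ℝ)..1.6, phi t ≤ 0.023918 := by
    apply integral_phi_le_of_taylor (hp := n0) <;> norm_num [gaussianPieceIntegral]
  have q1 : ∫ t in (1.6 : ℝ)..1.8, phi t ≤ 0.018904 := by
    apply integral_phi_le_of_taylor (hp := n1) <;> norm_num [gaussianPieceIntegral]
  have q2 : ∫ t in (1.8 : ℝ)..2, phi t ≤ 0.013216 := by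
    apply integral_phi_le_of_taylor (hp := n2) <;> norm_num [gaussianPieceIntegral]
  rw [Phibar_eq_integral_add (a := 1.414) (b := 1.6) (by norm_num),
    Phibar_eq_integral_add (a := 1.6) (b := 1.8) (by norm_num),
    Phibar_eq_integral_add (a := 1.8) (b := 2) (by norm_num)]
  linarith [Phibar_two_le]

lemma Phibar_sqrt_two_le : Phibar √2 ≤ 0.079218 :=
  (antitone_Phibar (Real.le_sqrt_of_sq_le (by norm_num))).trans Phibar_1414_le

lemma le_Phibar_one : 0.079942 + Phibar √2 ≤ Phibar 1 := by
  have h1414 : (1.414 : ℝ) ≤ √2 := Real.le_sqrt_of_sq_le (by norm_num)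
  rw [Phibar_eq_integral_add (a := 1) (b := √2) (by linarith),
    ← intervalIntegral.integral_add_adjacent_intervals (a := 1) (b := 1.414) (c := √2)
      integrable_phi.intervalIntegrable integrable_phi.intervalIntegrable]
  linarith [le_integral_phi_one_1414,
    intervalIntegral.integral_nonneg (μ := volume) h1414 fun t _ => (phi_pos t).le]

lemma c1_pos : 0 < c1 := by
  have := Phibar_pos √2
  rw [c1]; positivity

lemma four_mul_Phibar_sqrt_two_mul_c1 : 4 * Phibar √2 * c1 = 1 := by
  have := Phibar_pos √2
  rw [c1]; field_simp

lemma c1_mul_le_c2 : c1 * (1 + (1 + √3) / 250) ≤ c2 := by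
  rw [c2]
  gcongr
  exacts [c1_pos.le, le_mills _]

lemma c1_le_c2 : c1 ≤ c2 := by
  nlinarith [c1_mul_le_c2, c1_pos, Real.sqrt_nonneg 3]

lemma two_le_c2 : 2 ≤ c2 := by
  nlinarith [c1_le_c2, four_mul_Phibar_sqrt_two_mul_c1, Phibar_sqrt_two_le, c1_pos]

lemma one_le_two_mul_Phibar_one_mul_c2 : 1 ≤ 2 * Phibar 1 * c2 := by
  have hP := Phibar_pos √2
  have hk : (1.010928 : ℝ) ≤ 1 + (1 + √3) / 250 := by
    linarith [Real.le_sqrt_of_sq_le (show (1.732 : ℝ) ^ 2 ≤ 3 by norm_num)]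
  -- since `4 * Phibar √2 * c1 = 1`, the claim amounts to `Phibar 1 / Phibar √2 ≥ 2 / 1.0109`
  have hc2 : 1.010928 * c1 ≤ c2 := by nlinarith [c1_mul_le_c2, c1_pos]
  nlinarith [mul_le_mul le_Phibar_one hc2 (by nlinarith [c1_pos]) (Phibar_pos 1).le,
    four_mul_Phibar_sqrt_two_mul_c1, Phibar_sqrt_two_le, c1_pos]

lemma one_le_h {x : ℝ} (hx : x ≤ 0) : 1 ≤ h x := by
  have hx' : 1 / 2 ≤ Phibar x := Phibar_zero ▸ antitone_Phibar hx
  rw [h]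
  nlinarith [two_le_c2]

lemma half_le_h {x : ℝ} (hx : x ≤ 1) : 1 / 2 ≤ h x := by
  rw [h]
  nlinarith [antitone_Phibar hx, one_le_two_mul_Phibar_one_mul_c2, two_le_c2]

lemma one_div_two_mul_sq_le_h {x : ℝ} (hx : x ∈ Icc 1 √2) : 1 / (2 * x ^ 2) ≤ h x := by
  have hmin := min_Phibar_one_le_sq_mul_Phibar hx
  have h4 : 1 ≤ 4 * Phibar √2 * c2 := by
    nlinarith [four_mul_Phibar_sqrt_two_mul_c1, c1_le_c2, Phibar_pos √2]
  have hc2 : 1 ≤ 2 * min (Phibar 1) (2 * Phibar √2) * c2 := by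
    rcases min_choice (Phibar 1) (2 * Phibar √2) with hm | hm <;> rw [hm]
    exacts [one_le_two_mul_Phibar_one_mul_c2, by linarith]
  rw [h, div_le_iff₀ (by nlinarith [hx.1])]
  nlinarith [two_le_c2]

lemma g_le_h {x : ℝ} (hx : x ≤ √3) : g x ≤ h x := by
  have hm : phi x ≤ mills √3 * Phibar x :=
    (div_le_iff₀ (Phibar_pos x)).1 (monotone_mills hx)
  have : h x - g x = c1 / 250 * (mills √3 * Phibar x - phi x) := by
    rw [h, g, c2]; ring
  nlinarith [c1_pos]

theorem h1_le_h : ∀ x : ℝ, h1 x ≤ h x := by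
  intro x
  unfold h1
  split_ifs with hx0 hx1 hx2 hx3
  · exact one_le_h hx0
  · exact half_le_h hx1
  · exact one_div_two_mul_sq_le_h ⟨(not_le.1 hx1).le, hx2.le⟩
  · exact g_le_h hx3
  · exact le_rfl
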